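/- arXiv:2005.08898 — 2 statements merged into one kernel-verified Lean document; each statement's English description precedes it below -/
import Mathlib

section
/- Let L_star = U_star·Σ_star^{1/2} ∈ R^{n₁×r}, where U_star has orthonormal columns and Σ_star is an r×r positive diagonal matrix. Let L ∈ R^{n₁×r}, Δ_L := L − L_star, and suppose ε := ‖Δ_L·Σ_star^{-1/2}‖_op < 1. Then ‖L·(L^T L)^{-1}·Σ_star^{1/2} − U_star‖_op ≤ √2·ε/(1−ε). -/
/-!
With `C := L Σ^{-1/2} = U + E` and `‖E‖ = ε`, the matrix `L (Lᵀ L)⁻¹ Σ^{1/2}` equals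
`D := C (Cᵀ C)⁻¹`. If `P := D Cᵀ` is the orthogonal projection onto the column space of `C`, then
`D - U = (1 - P) E - D Eᵀ U`, and the two summands have orthogonal column spaces, so by the
C⋆-identity `‖D - U‖²` is at most the sum of their squared norms. The first has norm at most `ε`.
For the second, `Uᵀ C = 1 + Uᵀ E` is invertible by a Neumann series, so `C` has a left inverse `K`
with `‖K‖ ≤ 1/(1 - ε)`, and `‖D‖ = ‖K P‖ ≤ ‖K‖`.
-/

open Matrix

/-- The operator norm (largest singular value) of a matrix. -/
noncomputable def opNorm {n₁ n₂ : ℕ} (A : Matrix (Fin n₁) (Fin n₂) ℝ) : ℝ :=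
  ‖LinearMap.toContinuousLinearMap (Matrix.toEuclideanLin A)‖

open scoped Matrix.Norms.L2Operator

namespace Matrix

variable {m n : Type*} [Fintype m] [Fintype n] [DecidableEq n]

theorem l2_opNorm_transpose [DecidableEq m] (A : Matrix m n ℝ) : ‖Aᵀ‖ = ‖A‖ := by
  rw [← conjTranspose_eq_transpose_of_trivial, l2_opNorm_conjTranspose]

theorem l2_opNorm_transpose_mul_self (A : Matrix m n ℝ) : ‖Aᵀ * A‖ = ‖A‖ * ‖A‖ := by
  rw [← conjTranspose_eq_transpose_of_trivial, l2_opNorm_conjTranspose_mul_self]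

theorem l2_opNorm_le_one_of_isSymm_of_isIdempotentElem {P : Matrix n n ℝ} (hs : P.IsSymm)
    (hi : IsIdempotentElem P) : ‖P‖ ≤ 1 := by
  have h := l2_opNorm_transpose_mul_self P
  rw [hs.eq, hi.eq] at h
  nlinarith [norm_nonneg P]

theorem l2_opNorm_one_le : ‖(1 : Matrix n n ℝ)‖ ≤ 1 :=
  l2_opNorm_le_one_of_isSymm_of_isIdempotentElem isSymm_one .one

theorem l2_opNorm_le_one_of_transpose_mul_self_eq_one {U : Matrix m n ℝ} (hU : Uᵀ * U = 1) :
    ‖U‖ ≤ 1 := by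
  have h := l2_opNorm_transpose_mul_self U
  rw [hU] at h
  nlinarith [norm_nonneg U, l2_opNorm_one_le (n := n)]

theorem l2_opNorm_add_sq_le_of_transpose_mul_eq_zero {A B : Matrix m n ℝ} (h : Aᵀ * B = 0) :
    ‖A + B‖ ^ 2 ≤ ‖A‖ ^ 2 + ‖B‖ ^ 2 := by
  have h' : Bᵀ * A = 0 := by rw [← transpose_transpose A, ← transpose_mul, h, transpose_zero]
  have hsum : (A + B)ᵀ * (A + B) = Aᵀ * A + Bᵀ * B := by
    rw [transpose_add, Matrix.add_mul, Matrix.mul_add, Matrix.mul_add, h, h', add_zero, zero_add]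
  simp only [sq, ← l2_opNorm_transpose_mul_self, hsum]
  exact norm_add_le _ _

theorem l2_opNorm_add_le_of_transpose_mul_eq_zero {A B : Matrix m n ℝ} (h : Aᵀ * B = 0) {a : ℝ}
    (hA : ‖A‖ ≤ a) (hB : ‖B‖ ≤ a) : ‖A + B‖ ≤ √2 * a := by
  have ha : 0 ≤ a := (norm_nonneg A).trans hA
  refine abs_le_of_sq_le_sq' ?_ (by positivity) |>.2
  calc ‖A + B‖ ^ 2 ≤ ‖A‖ ^ 2 + ‖B‖ ^ 2 := l2_opNorm_add_sq_le_of_transpose_mul_eq_zero h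
    _ ≤ a ^ 2 + a ^ 2 := by gcongr
    _ = (√2 * a) ^ 2 := by rw [mul_pow, Real.sq_sqrt zero_le_two]; ring

theorem l2_opNorm_inv_one_sub_le {T : Matrix n n ℝ} (hT : ‖T‖ < 1) :
    ‖(1 - T)⁻¹‖ ≤ (1 - ‖T‖)⁻¹ := by
  rw [nonsing_inv_eq_ringInverse, ← geom_series_eq_inverse T hT]
  linarith [tsum_geometric_le_of_norm_lt_one T hT, l2_opNorm_one_le (n := n)]

theorem exists_mul_eq_one_l2_opNorm_le [DecidableEq m] {U C : Matrix m n ℝ} (hU : Uᵀ * U = 1)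
    (hCU : ‖C - U‖ < 1) : ∃ K : Matrix n m ℝ, K * C = 1 ∧ ‖K‖ ≤ (1 - ‖C - U‖)⁻¹ := by
  set T := -(Uᵀ * (C - U))
  have hUt : ‖Uᵀ‖ ≤ 1 := by
    rw [l2_opNorm_transpose]; exact l2_opNorm_le_one_of_transpose_mul_self_eq_one hU
  have hT : ‖T‖ ≤ ‖C - U‖ := by
    rw [norm_neg]
    calc ‖Uᵀ * (C - U)‖ ≤ ‖Uᵀ‖ * ‖C - U‖ := l2_opNorm_mul _ _
      _ ≤ ‖C - U‖ := mul_le_of_le_one_left (norm_nonneg _) hUt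
  have hT1 : ‖T‖ < 1 := hT.trans_lt hCU
  have hUC : Uᵀ * C = 1 - T := by
    rw [sub_neg_eq_add, Matrix.mul_sub, hU, add_sub_cancel]
  refine ⟨(1 - T)⁻¹ * Uᵀ, ?_, ?_⟩
  · rw [Matrix.mul_assoc, hUC, nonsing_inv_mul]
    exact (isUnit_iff_isUnit_det _).mp (isUnit_one_sub_of_norm_lt_one hT1)
  · calc ‖(1 - T)⁻¹ * Uᵀ‖ ≤ ‖(1 - T)⁻¹‖ * ‖Uᵀ‖ := l2_opNorm_mul _ _
      _ ≤ (1 - ‖T‖)⁻¹ * 1 := by gcongr; exact l2_opNorm_inv_one_sub_le hT1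
      _ ≤ (1 - ‖C - U‖)⁻¹ := by rw [mul_one]; gcongr

theorem isUnit_det_transpose_mul_self_of_mul_eq_one {K : Matrix n m ℝ} {C : Matrix m n ℝ}
    (hK : K * C = 1) : IsUnit (Cᵀ * C).det := by
  have hinj : Function.Injective C.mulVec := fun x y hxy => by
    simpa [mulVec_mulVec, hK] using congrArg (K *ᵥ ·) hxy
  rw [← isUnit_iff_isUnit_det, ← conjTranspose_eq_transpose_of_trivial]
  exact (PosDef.conjTranspose_mul_self C hinj).isUnit

/-- A projection only when `Cᵀ * C` is invertible: otherwise `(Cᵀ * C)⁻¹ = 0`. -/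
noncomputable def colSpaceProj (C : Matrix m n ℝ) : Matrix m m ℝ := C * (Cᵀ * C)⁻¹ * Cᵀ

theorem transpose_mul_inv_transpose_mul_self (C : Matrix m n ℝ) :
    (C * (Cᵀ * C)⁻¹)ᵀ = (Cᵀ * C)⁻¹ * Cᵀ := by
  rw [transpose_mul, transpose_nonsing_inv, transpose_mul, transpose_transpose]

theorem isSymm_colSpaceProj (C : Matrix m n ℝ) : (colSpaceProj C).IsSymm := by
  rw [IsSymm, colSpaceProj, transpose_mul, transpose_mul_inv_transpose_mul_self,
    transpose_transpose, Matrix.mul_assoc]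

section FullColumnRank

variable {C : Matrix m n ℝ} (hC : IsUnit (Cᵀ * C).det)
include hC

theorem colSpaceProj_mul_self : colSpaceProj C * C = C := by
  rw [colSpaceProj, Matrix.mul_assoc, Matrix.mul_assoc, nonsing_inv_mul _ hC, Matrix.mul_one]

theorem isIdempotentElem_colSpaceProj : IsIdempotentElem (colSpaceProj C) := by
  rw [IsIdempotentElem]
  nth_rw 2 [colSpaceProj]
  rw [← Matrix.mul_assoc, ← Matrix.mul_assoc, colSpaceProj_mul_self hC, colSpaceProj]

theorem one_sub_colSpaceProj_mul_self [DecidableEq m] : (1 - colSpaceProj C) * C = 0 := by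
  rw [Matrix.sub_mul, Matrix.one_mul, colSpaceProj_mul_self hC, sub_self]

theorem l2_opNorm_mul_inv_transpose_mul_self_le [DecidableEq m] {K : Matrix n m ℝ}
    (hK : K * C = 1) : ‖C * (Cᵀ * C)⁻¹‖ ≤ ‖K‖ := by
  have hD : (C * (Cᵀ * C)⁻¹)ᵀ = K * colSpaceProj C := by
    rw [transpose_mul_inv_transpose_mul_self, colSpaceProj, ← Matrix.mul_assoc,
      ← Matrix.mul_assoc, hK, Matrix.one_mul]
  have hP : ‖colSpaceProj C‖ ≤ 1 := l2_opNorm_le_one_of_isSymm_of_isIdempotentElem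
    (isSymm_colSpaceProj C) (isIdempotentElem_colSpaceProj hC)
  calc ‖C * (Cᵀ * C)⁻¹‖ = ‖K * colSpaceProj C‖ := by rw [← hD, l2_opNorm_transpose]
    _ ≤ ‖K‖ * ‖colSpaceProj C‖ := l2_opNorm_mul _ _
    _ ≤ ‖K‖ := mul_le_of_le_one_right (norm_nonneg _) hP

theorem mul_inv_transpose_mul_self_sub_eq [DecidableEq m] {U : Matrix m n ℝ} (hU : Uᵀ * U = 1) :
    C * (Cᵀ * C)⁻¹ - U =
      (1 - colSpaceProj C) * (C - U) + C * (Cᵀ * C)⁻¹ * ((U - C)ᵀ * U) := by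
  have hPC := colSpaceProj_mul_self hC
  rw [colSpaceProj] at hPC ⊢
  simp only [transpose_sub, Matrix.sub_mul, Matrix.mul_sub, Matrix.one_mul, hU, Matrix.mul_one]
  rw [hPC, Matrix.mul_assoc (C * (Cᵀ * C)⁻¹) Cᵀ U]
  abel

end FullColumnRank

theorem l2_opNorm_mul_inv_transpose_mul_self_sub_le [DecidableEq m] {U C : Matrix m n ℝ}
    (hU : Uᵀ * U = 1) (hCU : ‖C - U‖ < 1) :
    ‖C * (Cᵀ * C)⁻¹ - U‖ ≤ √2 * (‖C - U‖ / (1 - ‖C - U‖)) := by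
  obtain ⟨K, hK, hK_le⟩ := exists_mul_eq_one_l2_opNorm_le hU hCU
  have hC := isUnit_det_transpose_mul_self_of_mul_eq_one hK
  have hε : 0 < 1 - ‖C - U‖ := by linarith
  have horth : ((1 - colSpaceProj C) * (C - U))ᵀ * (C * (Cᵀ * C)⁻¹ * ((U - C)ᵀ * U)) = 0 := by
    rw [transpose_mul, (isSymm_one.sub (isSymm_colSpaceProj C)).eq, Matrix.mul_assoc,
      ← Matrix.mul_assoc _ (C * _), ← Matrix.mul_assoc _ C, one_sub_colSpaceProj_mul_self hC,
      Matrix.zero_mul, Matrix.zero_mul, Matrix.mul_zero]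
  rw [mul_inv_transpose_mul_self_sub_eq hC hU]
  refine l2_opNorm_add_le_of_transpose_mul_eq_zero horth ?_ ?_
  · have hQ : ‖1 - colSpaceProj C‖ ≤ 1 := l2_opNorm_le_one_of_isSymm_of_isIdempotentElem
      (isSymm_one.sub (isSymm_colSpaceProj C)) (isIdempotentElem_colSpaceProj hC).one_sub
    calc ‖(1 - colSpaceProj C) * (C - U)‖ ≤ ‖1 - colSpaceProj C‖ * ‖C - U‖ := l2_opNorm_mul _ _
      _ ≤ ‖C - U‖ := mul_le_of_le_one_left (norm_nonneg _) hQ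
      _ ≤ ‖C - U‖ / (1 - ‖C - U‖) :=
        le_div_self (norm_nonneg _) hε (by linarith [norm_nonneg (C - U)])
  · calc ‖C * (Cᵀ * C)⁻¹ * ((U - C)ᵀ * U)‖
        ≤ ‖C * (Cᵀ * C)⁻¹‖ * (‖(U - C)ᵀ‖ * ‖U‖) :=
          (l2_opNorm_mul _ _).trans (by gcongr; exact l2_opNorm_mul _ _)
      _ ≤ (1 - ‖C - U‖)⁻¹ * (‖C - U‖ * 1) := by
          rw [l2_opNorm_transpose, norm_sub_rev]
          gcongr
          · exact (l2_opNorm_mul_inv_transpose_mul_self_le hC hK).trans hK_le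
          · exact l2_opNorm_le_one_of_transpose_mul_self_eq_one hU
      _ = ‖C - U‖ / (1 - ‖C - U‖) := by rw [mul_one, inv_mul_eq_div]

theorem mul_mul_inv_transpose_mul_mul_transpose {α : Type*} [CommRing α] (C : Matrix m n α)
    {M : Matrix n n α} (hM : IsUnit M.det) :
    C * M * ((C * M)ᵀ * (C * M))⁻¹ * Mᵀ = C * (Cᵀ * C)⁻¹ := by
  have hMt : IsUnit Mᵀ.det := by rwa [det_transpose]
  have hgram : (C * M)ᵀ * (C * M) = Mᵀ * (Cᵀ * C) * M := by
    simp only [transpose_mul, Matrix.mul_assoc]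
  rw [hgram, mul_inv_rev, mul_inv_rev]
  simp only [Matrix.mul_assoc]
  rw [mul_nonsing_inv_cancel_left _ _ hM, nonsing_inv_mul _ hMt, Matrix.mul_one]

end Matrix

theorem opNorm_eq_l2_opNorm {n₁ n₂ : ℕ} (A : Matrix (Fin n₁) (Fin n₂) ℝ) : opNorm A = ‖A‖ := rfl

/-- If `L_star = U_star Σ_star^{1/2}` with `U_star` having orthonormal columns and `Σ_star`
positive diagonal, and `ε := ‖(L − L_star) Σ_star^{-1/2}‖_op < 1`, then
`‖L (Lᵀ L)⁻¹ Σ_star^{1/2} − U_star‖_op ≤ √2 ε/(1 − ε)`. -/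
theorem opNorm_scaled_pseudoinverse_minus_U_bound {n₁ r : ℕ}
    (Ustar : Matrix (Fin n₁) (Fin r) ℝ) (σ : Fin r → ℝ)
    (hU : Ustarᵀ * Ustar = 1) (hσ : ∀ i, 0 < σ i)
    (Lstar L : Matrix (Fin n₁) (Fin r) ℝ)
    (hLstar : Lstar = Ustar * Matrix.diagonal (fun i => Real.sqrt (σ i)))
    (ε : ℝ)
    (hε : ε = opNorm ((L - Lstar) * Matrix.diagonal (fun i => (Real.sqrt (σ i))⁻¹)))
    (hε1 : ε < 1) :
    opNorm (L * (Lᵀ * L)⁻¹ * Matrix.diagonal (fun i => Real.sqrt (σ i)) - Ustar) ≤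
      Real.sqrt 2 * ε / (1 - ε) := by
  set S := diagonal fun i => √(σ i)
  set Sinv := diagonal fun i => (√(σ i))⁻¹
  have hsqrt : ∀ i, √(σ i) ≠ 0 := fun i => (Real.sqrt_pos.mpr (hσ i)).ne'
  have hSSinv : S * Sinv = 1 := by
    rw [diagonal_mul_diagonal, ← diagonal_one]; congr! 2 with i; exact mul_inv_cancel₀ (hsqrt i)
  have hSinvS : Sinv * S = 1 := mul_eq_one_comm.mp hSSinv
  have hL : L * Sinv * S = L := by rw [Matrix.mul_assoc, hSinvS, Matrix.mul_one]
  have hE : L * Sinv - Ustar = (L - Lstar) * Sinv := by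
    rw [Matrix.sub_mul, hLstar, Matrix.mul_assoc, hSSinv, Matrix.mul_one]
  have hpinv := (L * Sinv).mul_mul_inv_transpose_mul_mul_transpose
    (isUnit_det_of_right_inverse hSSinv)
  rw [hL, diagonal_transpose] at hpinv
  rw [opNorm_eq_l2_opNorm, hpinv, mul_div_assoc]
  rw [hε, opNorm_eq_l2_opNorm, ← hE] at hε1 ⊢
  exact l2_opNorm_mul_inv_transpose_mul_self_sub_le hU hε1
end

section
/- Let L_star ∈ R^{n₁×r}, R_star ∈ R^{n₂×r} satisfy L_star = U_star·Σ_star^{1/2} and R_star = V_star·Σ_star^{1/2} with U_star, V_star having orthonormal columns and Σ_star positive diagonal. For any L ∈ R^{n₁×r}, R ∈ R^{n₂×r}, writing Δ_L = L − L_star, Δ_R = R − R_star, and δ := max(‖Δ_L·Σ_star^{-1/2}‖_op, ‖Δ_R·Σ_star^{-1/2}‖_op), one has ‖L·R^T − L_star·R_star^T‖_F ≤ (1 + δ/2)·(‖Δ_L·Σ_star^{1/2}‖_F + ‖Δ_R·Σ_star^{1/2}‖_F). -/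
open Matrix

/-- Frobenius norm of a real matrix. -/
noncomputable def frob {n₁ n₂ : ℕ} (A : Matrix (Fin n₁) (Fin n₂) ℝ) : ℝ :=
  Real.sqrt (∑ i, ∑ j, (A i j) ^ 2)

/-!
Split `L Rᵀ - L⋆ R⋆ᵀ = Δ_L R⋆ᵀ + L⋆ Δ_Rᵀ + Δ_L Δ_Rᵀ`. Multiplying by a matrix with orthonormal
columns preserves the Frobenius norm, so the first two terms have norms `‖Δ_L Σ^{1/2}‖_F` and
`‖Δ_R Σ^{1/2}‖_F`. The cross term factors as `(Δ_L Σ^{-1/2}) (Δ_R Σ^{1/2})ᵀ`, and also as the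
transpose of `(Δ_R Σ^{-1/2}) (Δ_L Σ^{1/2})ᵀ`; with `‖A B‖_F ≤ ‖A‖_op ‖B‖_F` it is bounded by `δ`
times either of the first two norms, hence by `δ / 2` times their sum.
-/

variable {m n k : ℕ}

section Frobenius

attribute [local instance] Matrix.frobeniusNormedAddCommGroup

lemma frob_eq_norm (A : Matrix (Fin m) (Fin n) ℝ) : frob A = ‖A‖ := by
  rw [Matrix.frobenius_norm_def, frob, Real.sqrt_eq_rpow]
  simp only [Real.norm_eq_abs, Real.rpow_two, sq_abs]

lemma frob_nonneg (A : Matrix (Fin m) (Fin n) ℝ) : 0 ≤ frob A :=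
  Real.sqrt_nonneg _

lemma frob_transpose (A : Matrix (Fin m) (Fin n) ℝ) : frob Aᵀ = frob A := by
  rw [frob_eq_norm, frob_eq_norm, Matrix.frobenius_norm_transpose]

lemma frob_add_le (A B : Matrix (Fin m) (Fin n) ℝ) : frob (A + B) ≤ frob A + frob B := by
  simpa only [frob_eq_norm] using norm_add_le A B

end Frobenius

lemma frob_eq_sqrt_trace_mul_transpose (A : Matrix (Fin m) (Fin n) ℝ) :
    frob A = √(A * Aᵀ).trace := by
  simp [frob, Matrix.trace, Matrix.mul_apply, sq]

lemma frob_mul_transpose_of_orthonormal (A : Matrix (Fin m) (Fin k) ℝ)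
    (V : Matrix (Fin n) (Fin k) ℝ) (hV : Vᵀ * V = 1) : frob (A * Vᵀ) = frob A := by
  have h : A * Vᵀ * (A * Vᵀ)ᵀ = A * Aᵀ := by
    rw [Matrix.transpose_mul, Matrix.transpose_transpose, Matrix.mul_assoc,
      ← Matrix.mul_assoc Vᵀ, hV, Matrix.one_mul]
  rw [frob_eq_sqrt_trace_mul_transpose, h, ← frob_eq_sqrt_trace_mul_transpose]

lemma sq_frob_eq_sum_sq_norm_col (A : Matrix (Fin m) (Fin n) ℝ) :
    frob A ^ 2 = ∑ j, ‖WithLp.toLp 2 (Aᵀ j)‖ ^ 2 := by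
  rw [frob, Real.sq_sqrt (by positivity), Finset.sum_comm]
  simp only [EuclideanSpace.real_norm_sq_eq, Matrix.transpose_apply]

lemma frob_mul_le_opNorm_mul_frob (M : Matrix (Fin m) (Fin k) ℝ)
    (N : Matrix (Fin k) (Fin n) ℝ) : frob (M * N) ≤ opNorm M * frob N := by
  have hcol : ∀ j, ‖WithLp.toLp 2 ((M * N)ᵀ j)‖ ≤ opNorm M * ‖WithLp.toLp 2 (Nᵀ j)‖ := fun j =>
    (LinearMap.toContinuousLinearMap (Matrix.toEuclideanLin M)).le_opNorm (WithLp.toLp 2 (Nᵀ j))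
  refine le_of_sq_le_sq ?_ (mul_nonneg (norm_nonneg _) (frob_nonneg N))
  rw [mul_pow, sq_frob_eq_sum_sq_norm_col, sq_frob_eq_sum_sq_norm_col, Finset.mul_sum]
  gcongr with j
  simpa only [mul_pow] using pow_le_pow_left₀ (norm_nonneg _) (hcol j) 2

lemma frob_mul_transpose_le {A : Matrix (Fin m) (Fin k) ℝ} {B : Matrix (Fin n) (Fin k) ℝ}
    {S T : Matrix (Fin k) (Fin k) ℝ} (hTS : T * Sᵀ = 1) :
    frob (A * Bᵀ) ≤ opNorm (A * T) * frob (B * S) :=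
  calc frob (A * Bᵀ) = frob (A * T * (B * S)ᵀ) := by
        rw [Matrix.transpose_mul, Matrix.mul_assoc, ← Matrix.mul_assoc T, hTS, Matrix.one_mul]
    _ ≤ opNorm (A * T) * frob (B * S)ᵀ := frob_mul_le_opNorm_mul_frob _ _
    _ = opNorm (A * T) * frob (B * S) := by rw [frob_transpose]

/-- With `L_star = U_star Σ_star^{1/2}`, `R_star = V_star Σ_star^{1/2}`, and
`δ = max(‖Δ_L Σ_star^{-1/2}‖_op, ‖Δ_R Σ_star^{-1/2}‖_op)`, we have
`‖L Rᵀ − L_star R_starᵀ‖_F ≤ (1 + δ/2)(‖Δ_L Σ_star^{1/2}‖_F + ‖Δ_R Σ_star^{1/2}‖_F)`. -/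
theorem frob_LRt_sub_bound {n₁ n₂ r : ℕ}
    (Ustar : Matrix (Fin n₁) (Fin r) ℝ) (Vstar : Matrix (Fin n₂) (Fin r) ℝ)
    (σ : Fin r → ℝ) (hU : Ustarᵀ * Ustar = 1) (hV : Vstarᵀ * Vstar = 1)
    (hσ : ∀ i, 0 < σ i)
    (Lstar : Matrix (Fin n₁) (Fin r) ℝ) (Rstar : Matrix (Fin n₂) (Fin r) ℝ)
    (hLstar : Lstar = Ustar * Matrix.diagonal (fun i => Real.sqrt (σ i)))
    (hRstar : Rstar = Vstar * Matrix.diagonal (fun i => Real.sqrt (σ i)))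
    (L : Matrix (Fin n₁) (Fin r) ℝ) (R : Matrix (Fin n₂) (Fin r) ℝ)
    (δ : ℝ)
    (hδ : δ = max (opNorm ((L - Lstar) * Matrix.diagonal (fun i => (Real.sqrt (σ i))⁻¹)))
                  (opNorm ((R - Rstar) * Matrix.diagonal (fun i => (Real.sqrt (σ i))⁻¹)))) :
    frob (L * Rᵀ - Lstar * Rstarᵀ) ≤
      (1 + δ / 2) * (frob ((L - Lstar) * Matrix.diagonal (fun i => Real.sqrt (σ i))) +
                     frob ((R - Rstar) * Matrix.diagonal (fun i => Real.sqrt (σ i)))) := by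
  set D := Matrix.diagonal (fun i => Real.sqrt (σ i))
  set Dinv := Matrix.diagonal (fun i => (Real.sqrt (σ i))⁻¹)
  set ΔL := L - Lstar
  set ΔR := R - Rstar
  have hDT : Dᵀ = D := Matrix.diagonal_transpose _
  have hDinv : Dinv * Dᵀ = 1 := by
    rw [hDT, Matrix.diagonal_mul_diagonal, ← Matrix.diagonal_one]
    exact congrArg Matrix.diagonal (funext fun i => inv_mul_cancel₀ (Real.sqrt_pos.2 (hσ i)).ne')
  have decomp : L * Rᵀ - Lstar * Rstarᵀ = ΔL * Rstarᵀ + Lstar * ΔRᵀ + ΔL * ΔRᵀ := by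
    simp only [ΔL, ΔR, Matrix.transpose_sub, Matrix.sub_mul, Matrix.mul_sub]
    abel
  have hLR : frob (ΔL * Rstarᵀ) = frob (ΔL * D) := by
    rw [hRstar, Matrix.transpose_mul, hDT, ← Matrix.mul_assoc,
      frob_mul_transpose_of_orthonormal _ _ hV]
  have hRL : frob (Lstar * ΔRᵀ) = frob (ΔR * D) := by
    rw [← frob_transpose, Matrix.transpose_mul, Matrix.transpose_transpose, hLstar,
      Matrix.transpose_mul, hDT, ← Matrix.mul_assoc, frob_mul_transpose_of_orthonormal _ _ hU]
  have hcrossL : frob (ΔL * ΔRᵀ) ≤ δ * frob (ΔR * D) :=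
    (frob_mul_transpose_le hDinv).trans <|
      mul_le_mul_of_nonneg_right (hδ ▸ le_max_left _ _) (frob_nonneg _)
  have hcrossR : frob (ΔL * ΔRᵀ) ≤ δ * frob (ΔL * D) := by
    rw [← frob_transpose, Matrix.transpose_mul, Matrix.transpose_transpose]
    exact (frob_mul_transpose_le hDinv).trans <|
      mul_le_mul_of_nonneg_right (hδ ▸ le_max_right _ _) (frob_nonneg _)
  calc frob (L * Rᵀ - Lstar * Rstarᵀ)
      ≤ frob (ΔL * Rstarᵀ) + frob (Lstar * ΔRᵀ) + frob (ΔL * ΔRᵀ) := by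
        rw [decomp]
        exact (frob_add_le _ _).trans (add_le_add_left (frob_add_le _ _) _)
    _ ≤ (1 + δ / 2) * (frob (ΔL * D) + frob (ΔR * D)) := by
        rw [hLR, hRL]
        linarith
end
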